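/- Let m ≥ 0 be an integer and let Q(r) := √8 (m+1) r^m / (1 + r^{2m+2}). Then for all r > 0 one has A_θ[Q](r) = −2(m+1) r^{2m+2}/(1 + r^{2m+2}), and Q solves the Bogomol'nyi equation: ∂_r Q(r) = ((m + A_θ[Q](r))/r) Q(r) for all r > 0. -/

import Mathlib

/-!
The density `|Q|² r = 8(m+1)² r^{2m+1} / (1 + r^{2m+2})²` is the derivative of
`-4(m+1) / (1 + r^{2m+2})`, so the fundamental theorem of calculus gives `A_θ[Q]` in closed form.
The logarithmic derivative `Q'/Q = m/r - (2m+2) r^{2m+1} / (1 + r^{2m+2})` is then `(m + A_θ[Q])/r`.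
-/

open MeasureTheory Set

/-- `A_θ[ψ](r) = -(1/2)∫₀^r |ψ(r')|² r' dr'`. -/
noncomputable def Atheta (ψ : ℝ → ℂ) (r : ℝ) : ℝ :=
  -(1/2) * ∫ t in (0:ℝ)..r, ‖ψ t‖ ^ 2 * t

/-- The Jackiw–Pi vortex `Q(r) = √8 (m+1) r^m / (1 + r^{2m+2})`. -/
noncomputable def Qp (m : ℤ) (r : ℝ) : ℝ :=
  Real.sqrt 8 * ((m : ℝ) + 1) * r ^ m / (1 + r ^ (2 * m + 2))

lemma one_add_zpow_two_mul_add_two_pos (m : ℤ) (t : ℝ) : 0 < 1 + t ^ (2 * m + 2) := by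
  have : Even (2 * m + 2) := ⟨m + 1, by ring⟩
  linarith [this.zpow_nonneg t]

lemma hasDerivAt_Qp (m : ℤ) {r : ℝ} (hr : r ≠ 0) :
    HasDerivAt (Qp m)
      ((m - 2 * (m + 1) * r ^ (2 * m + 2) / (1 + r ^ (2 * m + 2))) / r * Qp m r) r := by
  have hd := (one_add_zpow_two_mul_add_two_pos m r).ne'
  have hnum := ((hasDerivAt_zpow m r (Or.inl hr)).const_mul (Real.sqrt 8 * ((m : ℝ) + 1)))
  have hden := (hasDerivAt_zpow (2 * m + 2) r (Or.inl hr)).const_add 1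
  refine (hnum.div hden hd).congr_deriv ?_
  rw [zpow_sub_one₀ hr, zpow_sub_one₀ hr, Qp]
  push_cast
  field_simp

lemma hasDerivAt_primitive_norm_Qp_sq_mul {m : ℤ} (hm : 0 ≤ m) (t : ℝ) :
    HasDerivAt (fun t : ℝ => -4 * ((m : ℝ) + 1) / (1 + t ^ (2 * m + 2)))
      (‖((Qp m t : ℝ) : ℂ)‖ ^ 2 * t) t := by
  have hd := (one_add_zpow_two_mul_add_two_pos m t).ne'
  have hden := (hasDerivAt_zpow (2 * m + 2) t (Or.inr (by omega))).const_add 1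
  refine ((hden.inv hd).const_mul (-4 * ((m : ℝ) + 1))).congr_deriv ?_
  have hpow : t ^ (2 * m + 2 - 1) = (t ^ m) ^ 2 * t := by
    rw [show 2 * m + 2 - 1 = m * 2 + 1 by ring, zpow_add' (Or.inr (Or.inl (by omega))),
      zpow_mul, zpow_one]
    norm_cast
  rw [Complex.norm_real, Real.norm_eq_abs, sq_abs, Qp, hpow, div_pow, mul_pow, mul_pow,
    Real.sq_sqrt (by norm_num)]
  push_cast
  field_simp
  ring

lemma Atheta_Qp {m : ℤ} (hm : 0 ≤ m) (r : ℝ) :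
    Atheta (fun t => ((Qp m t : ℝ) : ℂ)) r
      = -2 * ((m : ℝ) + 1) * r ^ (2 * m + 2) / (1 + r ^ (2 * m + 2)) := by
  have hcont : Continuous (Qp m) := by
    refine .div (continuous_const.mul (continuous_id.zpow₀ m fun _ => Or.inr hm)) ?_
      fun t => (one_add_zpow_two_mul_add_two_pos m t).ne'
    exact continuous_const.add (continuous_id.zpow₀ _ fun _ => Or.inr (by omega))
  rw [Atheta, intervalIntegral.integral_eq_sub_of_hasDerivAt
    (fun t _ => hasDerivAt_primitive_norm_Qp_sq_mul hm t)
    ((by fun_prop : Continuous fun t => ‖((Qp m t : ℝ) : ℂ)‖ ^ 2 * t).intervalIntegrable _ _),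
    zero_zpow _ (by omega)]
  have hd := (one_add_zpow_two_mul_add_two_pos m r).ne'
  field_simp
  ring

/-- `Q` solves the Bogomol'nyi equation: for `m ≥ 0`,
`A_θ[Q](r) = −2(m+1) r^{2m+2}/(1+r^{2m+2})` and `∂_r Q = ((m + A_θ[Q])/r) Q` on `(0,∞)`. -/
theorem Q_solves_Bogomolnyi (m : ℤ) (hm : 0 ≤ m) :
    (∀ r ∈ Set.Ioi (0:ℝ),
      Atheta (fun t => ((Qp m t : ℝ) : ℂ)) r
        = -2 * ((m : ℝ) + 1) * r ^ (2 * m + 2) / (1 + r ^ (2 * m + 2))) ∧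
    (∀ r ∈ Set.Ioi (0:ℝ),
      HasDerivAt (Qp m)
        ((((m : ℝ) + Atheta (fun t => ((Qp m t : ℝ) : ℂ)) r) / r) * Qp m r) r) := by
  refine ⟨fun r _ => Atheta_Qp hm r, fun r hr => ?_⟩
  rw [Atheta_Qp hm, neg_mul, neg_mul, neg_div, ← sub_eq_add_neg]
  exact hasDerivAt_Qp m (ne_of_gt hr)
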